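/- arXiv:2310.07150 — 3 statements merged into one kernel-verified Lean document; each statement's English description precedes it below -/
import Mathlib

section
/- For any constant ℓ ≥ 2, any finite candidate set M with |M| = m ≥ ℓ, and any two distinct candidates a, b ∈ M, there exists a profile P of at most m!/(m-ℓ)! top-ℓ ranking votes whose weighted majority graph has ω_P(a→b) = 2 and ω_P(x→y) = 0 for every other pair of distinct candidates {x,y} ≠ {a,b}. -/
set_option maxHeartbeats 1000000
open Fin.NatCast

/-- In a top-ℓ vote (a duplicate-free list of ranked candidates), `a` is preferred to `b`
if `a` is ranked and either `b` is unranked or `a` is ranked above `b`. -/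
def Prefs {M : Type} [DecidableEq M] (l : List M) (a b : M) : Prop :=
  a ∈ l ∧ (b ∉ l ∨ l.idxOf a < l.idxOf b)

instance {M : Type} [DecidableEq M] (l : List M) (a b : M) : Decidable (Prefs l a b) := by
  unfold Prefs; infer_instance

/-- The weighted majority graph weight `ω_P(a→b)`. -/
def wmg {M : Type} [DecidableEq M] (P : List (List M)) (a b : M) : ℤ :=
  (P.countP fun l => decide (Prefs l a b) : ℤ) - (P.countP fun l => decide (Prefs l b a) : ℤ)

/-! ### Auxiliary machinery -/

/-- A top-`ℓ` vote given by a ranking function `f`. -/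
def voteL {M : Type} {m : ℕ} (e : Fin m ≃ M) (ℓ : ℕ) (f : ℕ → Fin m) : List M :=
  (List.range ℓ).map (fun i => e (f i))

lemma voteL_length {M : Type} {m : ℕ} (e : Fin m ≃ M) (ℓ : ℕ) (f : ℕ → Fin m) :
    (voteL e ℓ f).length = ℓ := by simp [voteL]

lemma voteL_nodup {M : Type} {m : ℕ} (e : Fin m ≃ M) (ℓ : ℕ) (f : ℕ → Fin m) (g : Fin m → ℕ)
    (hfg : ∀ t : Fin m, ∀ i, i < ℓ → (f i = t ↔ i = g t)) : (voteL e ℓ f).Nodup := by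
  refine List.Nodup.map_on ?_ (List.nodup_range (n := ℓ))
  intro i hi j hj hij
  simp only [List.mem_range] at hi hj
  have h1 : f i = f j := e.injective hij
  have h2 := (hfg (f j) i hi).mp h1
  have h3 := (hfg (f j) j hj).mp rfl
  omega

lemma voteL_mem {M : Type} [DecidableEq M] {m : ℕ} (e : Fin m ≃ M) (ℓ : ℕ) (f : ℕ → Fin m)
    (g : Fin m → ℕ) (hfg : ∀ t : Fin m, ∀ i, i < ℓ → (f i = t ↔ i = g t)) (x : M) :
    x ∈ voteL e ℓ f ↔ g (e.symm x) < ℓ := by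
  simp only [voteL, List.mem_map, List.mem_range]
  constructor
  · rintro ⟨i, hi, rfl⟩
    rw [Equiv.symm_apply_apply]
    have := (hfg (f i) i hi).mp rfl
    omega
  · intro h
    exact ⟨g (e.symm x), h, by rw [(hfg (e.symm x) _ h).mpr rfl, Equiv.apply_symm_apply]⟩

lemma voteL_indexOf {M : Type} [DecidableEq M] {m : ℕ} (e : Fin m ≃ M) (ℓ : ℕ) (f : ℕ → Fin m)
    (g : Fin m → ℕ) (hfg : ∀ t : Fin m, ∀ i, i < ℓ → (f i = t ↔ i = g t)) (x : M)
    (hx : g (e.symm x) < ℓ) :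
    (voteL e ℓ f).idxOf x = g (e.symm x) := by
  have hlen : g (e.symm x) < (voteL e ℓ f).length := by
    rw [voteL_length]; exact hx
  have hget : (voteL e ℓ f)[g (e.symm x)]'hlen = x := by
    simp only [voteL, List.getElem_map, List.getElem_range]
    rw [(hfg (e.symm x) _ hx).mpr rfl, Equiv.apply_symm_apply]
  have h := List.Nodup.idxOf_getElem (voteL_nodup e ℓ f g hfg) _ hlen
  rwa [hget] at h

lemma voteL_prefs {M : Type} [DecidableEq M] {m : ℕ} (e : Fin m ≃ M) (ℓ : ℕ) (f : ℕ → Fin m)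
    (g : Fin m → ℕ) (hfg : ∀ t : Fin m, ∀ i, i < ℓ → (f i = t ↔ i = g t)) (x y : M) :
    Prefs (voteL e ℓ f) x y ↔
      (g (e.symm x) < ℓ ∧ (¬ g (e.symm y) < ℓ ∨ g (e.symm x) < g (e.symm y))) := by
  unfold Prefs
  rw [voteL_mem e ℓ f g hfg x, voteL_mem e ℓ f g hfg y]
  constructor
  · rintro ⟨h1, h2⟩
    refine ⟨h1, ?_⟩
    rcases h2 with h2 | h2
    · exact Or.inl h2
    · by_cases hy : g (e.symm y) < ℓ
      · rw [voteL_indexOf e ℓ f g hfg x h1, voteL_indexOf e ℓ f g hfg y hy] at h2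
        exact Or.inr h2
      · exact Or.inl hy
  · rintro ⟨h1, h2⟩
    refine ⟨h1, ?_⟩
    rcases h2 with h2 | h2
    · exact Or.inl h2
    · by_cases hy : g (e.symm y) < ℓ
      · rw [voteL_indexOf e ℓ f g hfg x h1, voteL_indexOf e ℓ f g hfg y hy]
        exact Or.inr h2
      · exact Or.inl hy

lemma countP_range_int (p : ℕ → Bool) (n : ℕ) :
    ((List.range n).countP p : ℤ) = ∑ k ∈ Finset.range n, (if p k then (1:ℤ) else 0) := by
  induction n with
  | zero => simp
  | succ n ih =>
    rw [List.range_succ, List.countP_append, Finset.sum_range_succ, ← ih]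
    push_cast [List.countP_cons]
    cases hp : p n <;> simp [hp]

lemma sum_window {m : ℕ} [NeZero m] (ℓ : ℕ) (hl : ℓ ≤ m) (t : Fin m) :
    ∑ k ∈ Finset.range m, (if (t - (k : Fin m)).val < ℓ then (1:ℤ) else 0) = ℓ := by
  rw [← Fin.sum_univ_eq_sum_range (fun k => if (t - (k : Fin m)).val < ℓ then (1:ℤ) else 0) m]
  simp only [Fin.cast_val_eq_self]
  have h1 : ∑ x : Fin m, (if (t - x).val < ℓ then (1:ℤ) else 0)
      = ∑ j : Fin m, (if j.val < ℓ then (1:ℤ) else 0) :=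
    Fintype.sum_equiv (Equiv.subLeft t) _ _ (fun x => rfl)
  rw [h1]
  rw [Fin.sum_univ_eq_sum_range (fun j => if j < ℓ then (1:ℤ) else 0) m]
  have hfil : (Finset.range m).filter (fun j => j < ℓ) = Finset.range ℓ := by
    ext j; simp only [Finset.mem_filter, Finset.mem_range]; omega
  rw [← Finset.sum_filter, hfil]
  simp

lemma cast_add_eq_iff {m : ℕ} [NeZero m] (k u : ℕ) (hu : u < m) (t : Fin m) :
    (((k + u : ℕ) : Fin m) = t) ↔ u = (t - (k : Fin m)).val := by
  rw [Nat.cast_add]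
  constructor
  · intro h
    have h2 : (u : Fin m) = t - (k : Fin m) := by rw [← h]; abel
    rw [← h2, Fin.val_cast_of_lt hu]
  · intro h
    have h2 : (u : Fin m) = t - (k : Fin m) := by rw [h, Fin.cast_val_eq_self]
    rw [h2]; abel

/-- ranking function for the `k`-th window vote -/
def fWd (m : ℕ) [NeZero m] (k i : ℕ) : Fin m := ((k + i : ℕ) : Fin m)
/-- ranking function for the reversed `k`-th window vote -/
def fRd (m ℓ : ℕ) [NeZero m] (k i : ℕ) : Fin m := ((k + (ℓ - 1 - i) : ℕ) : Fin m)
/-- ranking function for the modified reversed `0`-th window vote -/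
def fUd (m ℓ : ℕ) [NeZero m] (i : ℕ) : Fin m :=
  ((if i = ℓ - 2 then 0 else if i = ℓ - 1 then 1 else ℓ - 1 - i : ℕ) : Fin m)

/-- position function for `fWd` -/
def gWd (m : ℕ) [NeZero m] (k : ℕ) (t : Fin m) : ℕ := (t - (k : Fin m)).val
/-- position function for `fRd` -/
def gRd (m ℓ : ℕ) [NeZero m] (k : ℕ) (t : Fin m) : ℕ :=
  if gWd m k t < ℓ then ℓ - 1 - gWd m k t else ℓ
/-- position function for `fUd` -/
def gUd (ℓ : ℕ) {m : ℕ} (t : Fin m) : ℕ :=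
  if t.val = 0 then ℓ - 2 else if t.val = 1 then ℓ - 1 else if t.val < ℓ then ℓ - 1 - t.val else ℓ

lemma fWd_spec (m ℓ : ℕ) [NeZero m] (hl : ℓ ≤ m) (k : ℕ) :
    ∀ t : Fin m, ∀ i, i < ℓ → (fWd m k i = t ↔ i = gWd m k t) := by
  intro t i hi
  exact cast_add_eq_iff k i (lt_of_lt_of_le hi hl) t

lemma fRd_spec (m ℓ : ℕ) [NeZero m] (hℓ : 2 ≤ ℓ) (hl : ℓ ≤ m) (k : ℕ) :
    ∀ t : Fin m, ∀ i, i < ℓ → (fRd m ℓ k i = t ↔ i = gRd m ℓ k t) := by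
  intro t i hi
  unfold fRd gRd gWd
  rw [cast_add_eq_iff k (ℓ - 1 - i) (by omega) t]
  split_ifs <;> omega

lemma fUd_spec (m ℓ : ℕ) [NeZero m] (hℓ : 2 ≤ ℓ) (hl : ℓ ≤ m) :
    ∀ t : Fin m, ∀ i, i < ℓ → (fUd m ℓ i = t ↔ i = gUd ℓ t) := by
  intro t i hi
  unfold fUd gUd
  have hlt : (if i = ℓ - 2 then 0 else if i = ℓ - 1 then 1 else ℓ - 1 - i) < m := by
    split_ifs <;> omega
  rw [Fin.ext_iff, Fin.val_cast_of_lt hlt]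
  split_ifs <;> omega

lemma shift_sum (m : ℕ) (hm : 1 ≤ m) (F : ℕ → ℤ) :
    ∑ k ∈ Finset.range (m - 1), F (k + 1) = (∑ k ∈ Finset.range m, F k) - F 0 := by
  have hmm : m - 1 + 1 = m := by omega
  conv_rhs => rw [← hmm, Finset.sum_range_succ']
  ring

lemma window_sum_zero {m : ℕ} [NeZero m] (ℓ : ℕ) (hℓ : 2 ≤ ℓ) (hl : ℓ ≤ m)
    (tx ty : Fin m) (hne : tx ≠ ty) :
    ∑ k ∈ Finset.range m,
      (((if gWd m k tx < ℓ ∧ (¬ gWd m k ty < ℓ ∨ gWd m k tx < gWd m k ty) then (1:ℤ) else 0)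
        - (if gWd m k ty < ℓ ∧ (¬ gWd m k tx < ℓ ∨ gWd m k ty < gWd m k tx) then (1:ℤ) else 0))
       + ((if gRd m ℓ k tx < ℓ ∧ (¬ gRd m ℓ k ty < ℓ ∨ gRd m ℓ k tx < gRd m ℓ k ty) then (1:ℤ) else 0)
        - (if gRd m ℓ k ty < ℓ ∧ (¬ gRd m ℓ k tx < ℓ ∨ gRd m ℓ k ty < gRd m ℓ k tx) then (1:ℤ) else 0))) = 0 := by
  have hpt : ∀ k : ℕ,
      (((if gWd m k tx < ℓ ∧ (¬ gWd m k ty < ℓ ∨ gWd m k tx < gWd m k ty) then (1:ℤ) else 0)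
        - (if gWd m k ty < ℓ ∧ (¬ gWd m k tx < ℓ ∨ gWd m k ty < gWd m k tx) then (1:ℤ) else 0))
       + ((if gRd m ℓ k tx < ℓ ∧ (¬ gRd m ℓ k ty < ℓ ∨ gRd m ℓ k tx < gRd m ℓ k ty) then (1:ℤ) else 0)
        - (if gRd m ℓ k ty < ℓ ∧ (¬ gRd m ℓ k tx < ℓ ∨ gRd m ℓ k ty < gRd m ℓ k tx) then (1:ℤ) else 0)))
      = 2 * (if gWd m k tx < ℓ then (1:ℤ) else 0) - 2 * (if gWd m k ty < ℓ then (1:ℤ) else 0) := by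
    intro k
    have hd : gWd m k tx ≠ gWd m k ty := by
      intro hv
      apply hne
      have h2 : tx - (k : Fin m) = ty - (k : Fin m) := Fin.ext hv
      have h3 := congrArg (· + (k : Fin m)) h2
      simpa [sub_add_cancel] using h3
    unfold gRd
    split_ifs <;> omega
  rw [Finset.sum_congr rfl (fun k _ => hpt k), Finset.sum_sub_distrib,
    ← Finset.mul_sum, ← Finset.mul_sum]
  unfold gWd
  rw [sum_window ℓ hl tx, sum_window ℓ hl ty]
  ring

/-- McGarvey-type lemma for top-ℓ votes: for any `ℓ ≥ 2`, any candidate set `M` with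
`|M| = m ≥ ℓ` and any distinct `a b ∈ M`, there is a profile of at most `m!/(m-ℓ)!`
top-ℓ votes whose weighted majority graph has `ω(a→b) = 2` and all other weights `0`. -/
theorem mcgarvey_topl (M : Type) [Fintype M] [DecidableEq M] (ℓ : ℕ)
    (hℓ : 2 ≤ ℓ) (hm : ℓ ≤ Fintype.card M) (a b : M) (hab : a ≠ b) :
    ∃ P : List (List M),
      (∀ l ∈ P, l.Nodup ∧ l.length = ℓ) ∧
      P.length ≤ (Fintype.card M).factorial / (Fintype.card M - ℓ).factorial ∧
      wmg P a b = 2 ∧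
      ∀ x y : M, x ≠ y → ¬(x = a ∧ y = b) → ¬(x = b ∧ y = a) → wmg P x y = 0 := by
  obtain ⟨m, hmdef⟩ : ∃ m, Fintype.card M = m := ⟨_, rfl⟩
  rw [hmdef] at hm ⊢
  have hm2 : 2 ≤ m := le_trans hℓ hm
  haveI : NeZero m := ⟨by omega⟩
  have hv0 : (0 : Fin m).val = 0 := rfl
  have hv1 : (1 : Fin m).val = 1 := by
    rw [Fin.val_one']; exact Nat.mod_eq_of_lt (by omega)
  have h01 : (0 : Fin m) ≠ 1 := by
    intro h; have := congrArg Fin.val h; rw [hv0, hv1] at this; exact absurd this (by omega)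
  obtain ⟨e, he0, he1⟩ : ∃ e : Fin m ≃ M, e 0 = a ∧ e 1 = b := by
    obtain ⟨e1, he1a⟩ : ∃ e1 : Fin m ≃ M, e1 0 = a := by
      refine ⟨(Equiv.swap (0 : Fin m) ((Fintype.equivFinOfCardEq hmdef) a)).trans (Fintype.equivFinOfCardEq hmdef).symm, ?_⟩
      simp [Equiv.swap_apply_left]
    have h0b : (0 : Fin m) ≠ e1.symm b := by
      intro h
      apply hab
      rw [← he1a, h, Equiv.apply_symm_apply]
    refine ⟨(Equiv.swap (1 : Fin m) (e1.symm b)).trans e1, ?_, ?_⟩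
    · have h1 : Equiv.swap (1 : Fin m) (e1.symm b) 0 = 0 :=
        Equiv.swap_apply_of_ne_of_ne h01 h0b
      simp [Equiv.trans_apply, h1, he1a]
    · simp [Equiv.trans_apply, Equiv.swap_apply_left]
  have hsa : e.symm a = 0 := by rw [← he0, Equiv.symm_apply_apply]
  have hsb : e.symm b = 1 := by rw [← he1, Equiv.symm_apply_apply]
  rcases lt_or_ge m 3 with h3 | h3
  · -- m = 2, ℓ = 2
    have hm2' : m = 2 := by omega
    have hl2 : ℓ = 2 := by omega
    refine ⟨[[a, b], [a, b]], ?_, ?_, ?_, ?_⟩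
    · intro l hl
      simp only [List.mem_cons, List.not_mem_nil, or_false] at hl
      rcases hl with rfl | rfl <;> exact ⟨by simp [hab], by simp [hl2]⟩
    · rw [hm2', hl2]
      norm_num [Nat.factorial]
    · have hpab : Prefs [a, b] a b := by
        refine ⟨by simp, Or.inr ?_⟩
        rw [List.idxOf_cons_self, List.idxOf_cons_ne _ hab]
        omega
      have hnba : ¬ Prefs [a, b] b a := by
        rintro ⟨-, h | h⟩
        · exact h (by simp)
        · rw [List.idxOf_cons_self, List.idxOf_cons_ne _ hab] at h
          omega
      simp [wmg, List.countP_cons, hpab, hnba]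
    · have hz : ∀ z : M, z = a ∨ z = b := by
        intro z
        have hlt := (e.symm z).isLt
        have : (e.symm z).val = 0 ∨ (e.symm z).val = 1 := by omega
        rcases this with h | h
        · left
          rw [← he0, ← Equiv.apply_symm_apply e z]
          congr 1
          exact Fin.ext (by rw [h, hv0])
        · right
          rw [← he1, ← Equiv.apply_symm_apply e z]
          congr 1
          exact Fin.ext (by rw [h, hv1])
      intro x y hxy h1 h2
      rcases hz x with rfl | rfl <;> rcases hz y with rfl | rfl <;> tauto
  · -- main case m ≥ 3
    obtain ⟨P, hPdef⟩ : ∃ P : List (List M),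
        P = ((List.range m).map fun k => voteL e ℓ (fWd m k)) ++
          (voteL e ℓ (fUd m ℓ) ::
            ((List.range (m - 1)).map fun k => voteL e ℓ (fRd m ℓ (k + 1)))) := ⟨_, rfl⟩
    have hcount : ∀ x y : M, ((P.countP fun l => decide (Prefs l x y) : ℕ) : ℤ) =
        (∑ k ∈ Finset.range m, if Prefs (voteL e ℓ (fWd m k)) x y then (1:ℤ) else 0)
        + ((if Prefs (voteL e ℓ (fUd m ℓ)) x y then (1:ℤ) else 0)
        + (∑ k ∈ Finset.range (m - 1),
            if Prefs (voteL e ℓ (fRd m ℓ (k + 1))) x y then (1:ℤ) else 0)) := by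
      intro x y
      rw [hPdef, List.countP_append, List.countP_cons, List.countP_map, List.countP_map]
      push_cast
      rw [countP_range_int, countP_range_int]
      simp only [Function.comp, decide_eq_true_eq]
      ring
    have hshiftR : ∀ x y : M,
        ∑ k ∈ Finset.range (m - 1), (if Prefs (voteL e ℓ (fRd m ℓ (k + 1))) x y then (1:ℤ) else 0)
          = (∑ k ∈ Finset.range m, if Prefs (voteL e ℓ (fRd m ℓ k)) x y then (1:ℤ) else 0)
            - (if Prefs (voteL e ℓ (fRd m ℓ 0)) x y then (1:ℤ) else 0) := by
      intro x y
      have h := shift_sum m (by omega) (fun j => if Prefs (voteL e ℓ (fRd m ℓ j)) x y then (1:ℤ) else 0)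
      simpa using h
    have hwmg : ∀ x y : M, x ≠ y → wmg P x y =
        ((if Prefs (voteL e ℓ (fUd m ℓ)) x y then (1:ℤ) else 0)
          - (if Prefs (voteL e ℓ (fUd m ℓ)) y x then (1:ℤ) else 0))
        - ((if Prefs (voteL e ℓ (fRd m ℓ 0)) x y then (1:ℤ) else 0)
          - (if Prefs (voteL e ℓ (fRd m ℓ 0)) y x then (1:ℤ) else 0)) := by
      intro x y hxy
      have hne : e.symm x ≠ e.symm y := fun h => hxy (by
        have := congrArg e h; simpa using this)
      have hz : ∑ k ∈ Finset.range m,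
          (((if Prefs (voteL e ℓ (fWd m k)) x y then (1:ℤ) else 0)
            - (if Prefs (voteL e ℓ (fWd m k)) y x then (1:ℤ) else 0))
           + ((if Prefs (voteL e ℓ (fRd m ℓ k)) x y then (1:ℤ) else 0)
            - (if Prefs (voteL e ℓ (fRd m ℓ k)) y x then (1:ℤ) else 0))) = 0 := by
        calc ∑ k ∈ Finset.range m,
            (((if Prefs (voteL e ℓ (fWd m k)) x y then (1:ℤ) else 0)
              - (if Prefs (voteL e ℓ (fWd m k)) y x then (1:ℤ) else 0))
             + ((if Prefs (voteL e ℓ (fRd m ℓ k)) x y then (1:ℤ) else 0)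
              - (if Prefs (voteL e ℓ (fRd m ℓ k)) y x then (1:ℤ) else 0)))
            = ∑ k ∈ Finset.range m,
            (((if gWd m k (e.symm x) < ℓ ∧ (¬ gWd m k (e.symm y) < ℓ ∨ gWd m k (e.symm x) < gWd m k (e.symm y)) then (1:ℤ) else 0)
              - (if gWd m k (e.symm y) < ℓ ∧ (¬ gWd m k (e.symm x) < ℓ ∨ gWd m k (e.symm y) < gWd m k (e.symm x)) then (1:ℤ) else 0))
             + ((if gRd m ℓ k (e.symm x) < ℓ ∧ (¬ gRd m ℓ k (e.symm y) < ℓ ∨ gRd m ℓ k (e.symm x) < gRd m ℓ k (e.symm y)) then (1:ℤ) else 0)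
              - (if gRd m ℓ k (e.symm y) < ℓ ∧ (¬ gRd m ℓ k (e.symm x) < ℓ ∨ gRd m ℓ k (e.symm y) < gRd m ℓ k (e.symm x)) then (1:ℤ) else 0))) := by
              refine Finset.sum_congr rfl (fun k _ => ?_)
              simp only [voteL_prefs e ℓ (fWd m k) (gWd m k) (fWd_spec m ℓ hm k),
                voteL_prefs e ℓ (fRd m ℓ k) (gRd m ℓ k) (fRd_spec m ℓ hℓ hm k)]
          _ = 0 := window_sum_zero ℓ hℓ hm _ _ hne
      unfold wmg
      rw [hcount x y, hcount y x, hshiftR x y, hshiftR y x]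
      rw [Finset.sum_add_distrib, Finset.sum_sub_distrib, Finset.sum_sub_distrib] at hz
      linarith [hz]
    refine ⟨P, ?_, ?_, ?_, ?_⟩
    · -- nodup and length
      intro l hl
      rw [hPdef] at hl
      simp only [List.mem_append, List.mem_cons, List.mem_map, List.mem_range] at hl
      rcases hl with ⟨k, -, rfl⟩ | rfl | ⟨k, -, rfl⟩
      · exact ⟨voteL_nodup e ℓ _ _ (fWd_spec m ℓ hm k), voteL_length e ℓ _⟩
      · exact ⟨voteL_nodup e ℓ _ _ (fUd_spec m ℓ hℓ hm), voteL_length e ℓ _⟩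
      · exact ⟨voteL_nodup e ℓ _ _ (fRd_spec m ℓ hℓ hm (k + 1)), voteL_length e ℓ _⟩
    · -- length bound
      have hlen : P.length = 2 * m := by
        rw [hPdef]
        simp only [List.length_append, List.length_map, List.length_range, List.length_cons]
        omega
      rw [hlen]
      rw [Nat.le_div_iff_mul_le (Nat.factorial_pos _)]
      obtain ⟨n, rfl⟩ : ∃ n, m = n + 3 := ⟨m - 3, by omega⟩
      have hfle : (n + 3 - ℓ).factorial ≤ (n + 1).factorial :=
        Nat.factorial_le (by omega)
      calc 2 * (n + 3) * (n + 3 - ℓ).factorial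
          ≤ 2 * (n + 3) * (n + 1).factorial := by
            exact Nat.mul_le_mul_left _ hfle
        _ ≤ (n + 3) * ((n + 2) * (n + 1).factorial) := by
            have : 2 * (n + 3) ≤ (n + 3) * (n + 2) := by nlinarith
            nlinarith [Nat.factorial_pos (n + 1)]
        _ = (n + 3).factorial := by
            rw [Nat.factorial_succ (n + 2), Nat.factorial_succ (n + 1)]
    · -- wmg a b = 2
      rw [hwmg a b hab]
      simp only [voteL_prefs e ℓ (fUd m ℓ) (gUd ℓ) (fUd_spec m ℓ hℓ hm),
        voteL_prefs e ℓ (fRd m ℓ 0) (gRd m ℓ 0) (fRd_spec m ℓ hℓ hm 0),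
        hsa, hsb, gUd, gRd, gWd, hv0, hv1, Nat.cast_zero, sub_zero]
      split_ifs <;> first | omega | exact ‹False›.elim | exact absurd trivial ‹¬True›
    · -- other pairs
      intro x y hxy hxab hxba
      have hx0 : (e.symm x).val = 0 → x = a := by
        intro h
        have h2 : e.symm x = e.symm a := by rw [hsa]; exact Fin.ext (by rw [h, hv0])
        exact e.symm.injective h2
      have hx1 : (e.symm x).val = 1 → x = b := by
        intro h
        have h2 : e.symm x = e.symm b := by rw [hsb]; exact Fin.ext (by rw [h, hv1])
        exact e.symm.injective h2
      have hy0 : (e.symm y).val = 0 → y = a := by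
        intro h
        have h2 : e.symm y = e.symm a := by rw [hsa]; exact Fin.ext (by rw [h, hv0])
        exact e.symm.injective h2
      have hy1 : (e.symm y).val = 1 → y = b := by
        intro h
        have h2 : e.symm y = e.symm b := by rw [hsb]; exact Fin.ext (by rw [h, hv1])
        exact e.symm.injective h2
      have hne01 : ¬((e.symm x).val = 0 ∧ (e.symm y).val = 1) := by
        rintro ⟨u, v⟩; exact hxab ⟨hx0 u, hy1 v⟩
      have hne10 : ¬((e.symm x).val = 1 ∧ (e.symm y).val = 0) := by
        rintro ⟨u, v⟩; exact hxba ⟨hx1 u, hy0 v⟩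
      have hnev : (e.symm x).val ≠ (e.symm y).val := by
        intro h
        exact hxy (e.symm.injective (Fin.ext h))
      rw [hwmg x y hxy]
      simp only [voteL_prefs e ℓ (fUd m ℓ) (gUd ℓ) (fUd_spec m ℓ hℓ hm),
        voteL_prefs e ℓ (fRd m ℓ 0) (gRd m ℓ 0) (fRd_spec m ℓ hℓ hm 0),
        gUd, gRd, gWd, Nat.cast_zero, sub_zero]
      split_ifs <;> first | omega | exact ‹False›.elim | exact absurd trivial ‹¬True›
end

section
/- Under the up-rounding positional scoring rule for up-to-L votes, there exists a profile P' of t absent votes making candidate c the winner (with c favored in tie-breaking) if and only if the profile consisting of t copies of the length-1 vote [c] makes c the winner. -/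
/-- Up-rounding score of `x` in an up-to-`L` vote `l`: a candidate ranked `j`-th
(0-indexed) receives `a j`, unranked candidates receive `0`. -/
def scoreV {M : Type} [DecidableEq M] (a : ℕ → ℕ) (l : List M) (x : M) : ℕ :=
  if x ∈ l then a (l.idxOf x) else 0

/-- Total up-rounding score of `x` over a profile. -/
def totalScore {M : Type} [DecidableEq M] (a : ℕ → ℕ) (P : List (List M)) (x : M) : ℕ :=
  (P.map fun l => scoreV a l x).sum

lemma totalScore_append {M : Type} [DecidableEq M] (a : ℕ → ℕ) (P Q : List (List M)) (x : M) :
    totalScore a (P ++ Q) x = totalScore a P x + totalScore a Q x := by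
  simp [totalScore]

lemma scoreV_le {M : Type} [DecidableEq M] (a : ℕ → ℕ) (ha : ∀ i j : ℕ, i ≤ j → a j ≤ a i)
    (l : List M) (x : M) : scoreV a l x ≤ a 0 := by
  unfold scoreV
  split
  · exact ha 0 _ (Nat.zero_le _)
  · exact Nat.zero_le _

lemma totalScore_replicate_self {M : Type} [DecidableEq M] (a : ℕ → ℕ) (t : ℕ) (c : M) :
    totalScore a (List.replicate t [c]) c = t * a 0 := by
  simp [totalScore, scoreV, List.map_replicate, List.sum_replicate]

lemma totalScore_replicate_other {M : Type} [DecidableEq M] (a : ℕ → ℕ) (t : ℕ) (c x : M)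
    (hx : x ≠ c) : totalScore a (List.replicate t [c]) x = 0 := by
  simp [totalScore, scoreV, List.map_replicate, List.sum_replicate, hx]

/-- Under the up-rounding positional scoring rule for up-to-`L` votes (nonincreasing
scoring vector `a`), there exists a profile `P'` of `t` absent votes making `c` the winner
(ties broken in favor of `c`) iff the profile of `t` copies of the length-1 vote `[c]`
makes `c` the winner. -/
theorem upRounding_singleton (M : Type) [Fintype M] [DecidableEq M]
    (L t : ℕ) (hL : 1 ≤ L)
    (a : ℕ → ℕ) (ha : ∀ i j : ℕ, i ≤ j → a j ≤ a i)
    (c : M) (P : List (List M))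
    (hP : ∀ l ∈ P, l.Nodup ∧ 1 ≤ l.length ∧ l.length ≤ L) :
    (∃ P' : List (List M), P'.length = t ∧
        (∀ l ∈ P', l.Nodup ∧ 1 ≤ l.length ∧ l.length ≤ L) ∧
        ∀ x : M, totalScore a (P ++ P') x ≤ totalScore a (P ++ P') c) ↔
    (∀ x : M, totalScore a (P ++ List.replicate t [c]) x ≤
        totalScore a (P ++ List.replicate t [c]) c) := by
  constructor
  · rintro ⟨P', hlen, _, hwin⟩ x
    by_cases hx : x = c
    · subst hx; exact le_refl _
    have hP'c : totalScore a P' c ≤ t * a 0 := by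
      have : (P'.map fun l => scoreV a l c).sum ≤ P'.length * a 0 := by
        have := List.sum_le_card_nsmul (P'.map fun l => scoreV a l c) (a 0) ?_
        · simpa [smul_eq_mul] using this
        · intro y hy
          obtain ⟨l, _, rfl⟩ := List.mem_map.mp hy
          exact scoreV_le a ha l c
      rw [hlen] at this
      exact this
    rw [totalScore_append, totalScore_append, totalScore_replicate_self,
      totalScore_replicate_other a t c x hx, Nat.add_zero]
    have h1 := hwin x
    rw [totalScore_append, totalScore_append] at h1
    have h2 : totalScore a P x ≤ totalScore a P x + totalScore a P' x := Nat.le_add_right _ _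
    calc totalScore a P x ≤ totalScore a P c + totalScore a P' c := le_trans h2 h1
      _ ≤ totalScore a P c + t * a 0 := Nat.add_le_add_left hP'c _
  · intro h
    refine ⟨List.replicate t [c], List.length_replicate, ?_, h⟩
    intro l hl
    rw [List.eq_of_mem_replicate hl]
    exact ⟨List.nodup_singleton c, le_refl 1, hL⟩
end

section
/- Under the down-rounding positional scoring rule with a_2 = ⋯ = a_L, if there exists a profile P' of t up-to-L votes making c the winner, then there exists such a profile in which every vote is either the singleton vote [c] or a full top-L vote with c ranked first. -/
/-- Down-rounding score of `x` in an up-to-`L` vote `l` of length `ℓ'`: a candidate ranked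
`j`-th (0-indexed) receives `a (L − ℓ' + j)`, unranked candidates receive `0`. -/
def dscore {M : Type} [DecidableEq M] (a : ℕ → ℕ) (L : ℕ) (l : List M) (x : M) : ℕ :=
  if x ∈ l then a (L - l.length + l.idxOf x) else 0

/-- Total down-rounding score of `x` over a profile. -/
def dtotal {M : Type} [DecidableEq M] (a : ℕ → ℕ) (L : ℕ) (P : List (List M)) (x : M) : ℕ :=
  (P.map fun l => dscore a L l x).sum

/-- Normalization of a vote: full-length votes get `c` moved to the front,
shorter votes are replaced by the singleton `[c]`. -/
def dnorm {M : Type} [DecidableEq M] (c : M) (L : ℕ) (l : List M) : List M :=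
  if l.length = L then (if c ∈ l then c :: l.erase c else c :: l.tail) else [c]

lemma dnorm_struct {M : Type} [DecidableEq M] (c : M) (L : ℕ) (hL : 2 ≤ L) (l : List M)
    (hnd : l.Nodup) (h1 : 1 ≤ l.length) (h2 : l.length ≤ L) :
    (dnorm c L l).Nodup ∧ 1 ≤ (dnorm c L l).length ∧ (dnorm c L l).length ≤ L ∧
      (dnorm c L l = [c] ∨ ((dnorm c L l).length = L ∧ (dnorm c L l).head? = some c)) := by
  unfold dnorm
  split_ifs with h hc
  · have hlen : (c :: l.erase c).length = L := by
      simp [List.length_erase_of_mem hc]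
      omega
    refine ⟨?_, by omega, by omega, Or.inr ⟨hlen, rfl⟩⟩
    exact List.nodup_cons.2 ⟨List.Nodup.not_mem_erase hnd, hnd.erase c⟩
  · have hlen : (c :: l.tail).length = L := by
      simp [List.length_tail]; omega
    refine ⟨?_, by omega, by omega, Or.inr ⟨hlen, rfl⟩⟩
    exact List.nodup_cons.2 ⟨fun hm => hc (List.mem_of_mem_tail hm), hnd.sublist (List.tail_sublist l)⟩
  · exact ⟨List.nodup_singleton c, by simp, by simp only [List.length_singleton]; omega,
      Or.inl rfl⟩

lemma dnorm_score_c {M : Type} [DecidableEq M] (a : ℕ → ℕ) (c : M) (L : ℕ) (hL : 2 ≤ L)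
    (ha : ∀ i j : ℕ, i ≤ j → a j ≤ a i)
    (hconst : ∀ i j : ℕ, 1 ≤ i → i < L → 1 ≤ j → j < L → a i = a j)
    (l : List M) (h1 : 1 ≤ l.length) (h2 : l.length ≤ L) :
    dscore a L l c ≤ dscore a L (dnorm c L l) c := by
  by_cases h : l.length = L
  · by_cases hc : c ∈ l
    · have e : dnorm c L l = c :: l.erase c := by simp [dnorm, h, hc]
      rw [e]
      have hlen : (c :: l.erase c).length = L := by
        simp [List.length_erase_of_mem hc]; omega
      unfold dscore
      rw [if_pos hc, if_pos (List.mem_cons_self (a := c) (l := l.erase c)), hlen,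
        List.idxOf_cons_self]
      simp only [Nat.sub_self, Nat.add_zero, Nat.zero_add]
      exact ha 0 _ (Nat.zero_le _)
    · have e : dnorm c L l = c :: l.tail := by simp [dnorm, h, hc]
      rw [e]
      unfold dscore
      rw [if_neg hc]
      exact Nat.zero_le _
  · have e : dnorm c L l = [c] := by simp [dnorm, h]
    rw [e]
    by_cases hc : c ∈ l
    · unfold dscore
      rw [if_pos hc, if_pos (List.mem_singleton_self c)]
      simp only [List.idxOf_cons_self, List.length_singleton, Nat.add_zero]
      have hidx : l.idxOf c < l.length := List.idxOf_lt_length_iff.2 hc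
      have key : a (L - l.length + l.idxOf c) = a (L - 1) := by
        apply hconst <;> omega
      omega
    · unfold dscore
      rw [if_neg hc]
      exact Nat.zero_le _

lemma dnorm_score_x {M : Type} [DecidableEq M] (a : ℕ → ℕ) (c x : M) (hx : x ≠ c) (L : ℕ)
    (hL : 2 ≤ L) (ha : ∀ i j : ℕ, i ≤ j → a j ≤ a i)
    (hconst : ∀ i j : ℕ, 1 ≤ i → i < L → 1 ≤ j → j < L → a i = a j)
    (l : List M) (h1 : 1 ≤ l.length) (h2 : l.length ≤ L) :
    dscore a L (dnorm c L l) x ≤ dscore a L l x := by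
  have key : ∀ r : List M, x ∈ r → (c :: r).length = L → (∀ y ∈ r, y ∈ l) →
      dscore a L (c :: r) x ≤ dscore a L l x := by
    intro r hxr hlr hsub
    have hxl : x ∈ l := hsub x hxr
    unfold dscore
    rw [if_pos (List.mem_cons_of_mem c hxr), if_pos hxl, hlr, Nat.sub_self, Nat.zero_add,
      List.idxOf_cons_ne _ (Ne.symm hx)]
    have hidx : r.idxOf x < r.length := List.idxOf_lt_length_iff.2 hxr
    have hoidx : l.idxOf x < l.length := List.idxOf_lt_length_iff.2 hxl
    have heq : a (r.idxOf x + 1) = a (L - 1) := by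
      apply hconst <;> simp at hlr <;> omega
    have hle : a (L - 1) ≤ a (L - l.length + l.idxOf x) := by
      apply ha; omega
    simp only [Nat.succ_eq_add_one]
    omega
  unfold dnorm
  split_ifs with h hc
  · by_cases hxm : x ∈ c :: l.erase c
    · have hxr : x ∈ l.erase c := by
        rcases List.mem_cons.1 hxm with h' | h'
        · exact absurd h' hx
        · exact h'
      apply key _ hxr
      · simp [List.length_erase_of_mem hc, h]; omega
      · intro y hy; exact List.mem_of_mem_erase hy
    · rw [dscore, if_neg hxm]; exact Nat.zero_le _
  · by_cases hxm : x ∈ c :: l.tail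
    · have hxr : x ∈ l.tail := by
        rcases List.mem_cons.1 hxm with h' | h'
        · exact absurd h' hx
        · exact h'
      apply key _ hxr
      · simp [List.length_tail]; omega
      · intro y hy; exact List.mem_of_mem_tail hy
    · rw [dscore, if_neg hxm]; exact Nat.zero_le _
  · rw [dscore, if_neg (by simp [hx])]; exact Nat.zero_le _

/-- Under the down-rounding positional scoring rule with `a₁ ≥ a₂ = ⋯ = a_L ≥ 0`:
if some profile `P'` of `t` up-to-`L` votes makes `c` the winner (ties favoring `c`),
then some such profile exists in which every vote is either the singleton vote `[c]`
or a full top-`L` vote ranking `c` first. -/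
theorem downRounding_normalForm (M : Type) [Fintype M] [DecidableEq M]
    (L t : ℕ) (hL : 2 ≤ L)
    (a : ℕ → ℕ) (ha : ∀ i j : ℕ, i ≤ j → a j ≤ a i)
    (hconst : ∀ i j : ℕ, 1 ≤ i → i < L → 1 ≤ j → j < L → a i = a j)
    (c : M) (P : List (List M))
    (hP : ∀ l ∈ P, l.Nodup ∧ 1 ≤ l.length ∧ l.length ≤ L)
    (hexists : ∃ P' : List (List M), P'.length = t ∧
        (∀ l ∈ P', l.Nodup ∧ 1 ≤ l.length ∧ l.length ≤ L) ∧
        ∀ x : M, dtotal a L (P ++ P') x ≤ dtotal a L (P ++ P') c) :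
    ∃ P'' : List (List M), P''.length = t ∧
      (∀ l ∈ P'', l.Nodup ∧ 1 ≤ l.length ∧ l.length ≤ L) ∧
      (∀ l ∈ P'', l = [c] ∨ (l.length = L ∧ l.head? = some c)) ∧
      ∀ x : M, dtotal a L (P ++ P'') x ≤ dtotal a L (P ++ P'') c := by
  obtain ⟨P', hlen, hP', hwin⟩ := hexists
  refine ⟨P'.map (dnorm c L), by simp [hlen], ?_, ?_, ?_⟩
  · intro l hl
    obtain ⟨l', hl', rfl⟩ := List.mem_map.1 hl
    obtain ⟨hnd, h1, h2⟩ := hP' l' hl'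
    obtain ⟨a1, a2, a3, _⟩ := dnorm_struct c L hL l' hnd h1 h2
    exact ⟨a1, a2, a3⟩
  · intro l hl
    obtain ⟨l', hl', rfl⟩ := List.mem_map.1 hl
    obtain ⟨hnd, h1, h2⟩ := hP' l' hl'
    exact (dnorm_struct c L hL l' hnd h1 h2).2.2.2
  · intro x
    have hsplit : ∀ (Q : List (List M)) (y : M),
        dtotal a L (P ++ Q) y = dtotal a L P y + dtotal a L Q y := by
      intro Q y; simp [dtotal]
    have hcle : dtotal a L P' c ≤ dtotal a L (P'.map (dnorm c L)) c := by
      simp only [dtotal, List.map_map]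
      apply List.sum_le_sum
      intro l hl
      obtain ⟨_, h1, h2⟩ := hP' l hl
      exact dnorm_score_c a c L hL ha hconst l h1 h2
    by_cases hxc : x = c
    · subst hxc; exact le_refl _
    · have hxle : dtotal a L (P'.map (dnorm c L)) x ≤ dtotal a L P' x := by
        simp only [dtotal, List.map_map]
        apply List.sum_le_sum
        intro l hl
        obtain ⟨_, h1, h2⟩ := hP' l hl
        exact dnorm_score_x a c x hxc L hL ha hconst l h1 h2
      have := hwin x
      rw [hsplit, hsplit] at this ⊢
      omega
end
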